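/- Consider the system ė = ν, ν̇ = -k₄e - k₅ν - k₆·ν/(e + c) with positive gains k₄, k₅, k₆, constant c > 0, and initial condition with e(0) + c > 0. Then the equilibrium (e,ν) = (0,0) is asymptotically stable: every trajectory starting in {e + c > 0} with bounded initial data satisfies (e(t), ν(t)) → (0,0) as t → ∞. -/

import Mathlib

/-!
Besides `L = k₄e²/2 + ν²/2`, use the Liénard coordinate `y = ν + Φ(e)`, where
`Φ(e) = k₅e + k₆ log((e + c)/c)` is the primitive of the damping vanishing at `0`; then
`ẏ = -k₄e`, and `W = k₄e²/2 + y²/2` has `Ẇ = -k₄ e Φ(e) ≤ 0`. The sum `U = L + W` is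
nonincreasing while `e + c > 0` and bounds both `ν` and `y`, hence `Φ(e)`; since `Φ → -∞` at the
barrier `e = -c`, a continuity argument keeps `e + c` above a fixed margin `δ > 0` forever.
On `{e + c ≥ δ}` the damping is bounded and `|Φ(e)| ≲ |e|`, so `U̇ ≤ -r U` for some `r > 0`
and `U` decays exponentially, dragging `e` and `ν` to `0`.
-/

open Real Filter Set

theorem antitoneOn_of_forall_hasDerivAt_nonpos {f f' : ℝ → ℝ} {D : Set ℝ} (hD : Convex ℝ D)
    (hf : ∀ t ∈ D, HasDerivAt f (f' t) t) (hf' : ∀ t ∈ interior D, f' t ≤ 0) :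
    AntitoneOn f D :=
  antitoneOn_of_hasDerivWithinAt_nonpos hD
    (fun t ht => (hf t ht).continuousAt.continuousWithinAt)
    (fun t ht => (hf t (interior_subset ht)).hasDerivWithinAt) hf'

theorem le_mul_exp_neg_of_hasDerivAt_le {f f' : ℝ → ℝ} {r : ℝ}
    (hf : ∀ t ≥ 0, HasDerivAt f (f' t) t) (hf' : ∀ t ≥ 0, f' t ≤ -r * f t) :
    ∀ t ≥ 0, f t ≤ f 0 * exp (-r * t) := by
  have hanti : AntitoneOn (fun t => f t * exp (r * t)) (Ici 0) := by
    refine antitoneOn_of_forall_hasDerivAt_nonpos (convex_Ici 0)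
      (fun t ht => (hf t ht).mul (((hasDerivAt_id t).const_mul r).exp)) fun t ht => ?_
    rw [interior_Ici] at ht
    simp only [id, mul_one]
    nlinarith [hf' t ht.le, exp_pos (r * t)]
  intro t ht
  have h := hanti (mem_Ici.2 le_rfl) (mem_Ici.2 ht) ht
  simp only [mul_zero, exp_zero, mul_one] at h
  calc f t = f t * exp (r * t) * exp (-r * t) := by
        rw [mul_assoc, ← exp_add, neg_mul, add_neg_cancel, exp_zero, mul_one]
    _ ≤ f 0 * exp (-r * t) := by gcongr

theorem forall_le_of_bootstrap {f : ℝ → ℝ} {δ : ℝ} (hf : Continuous f) (hδ : 0 < δ) (h0 : 0 < f 0)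
    (h : ∀ T, (∀ s ∈ Ico 0 T, 0 < f s) → ∀ s ∈ Ico 0 T, δ ≤ f s) :
    ∀ t ≥ 0, δ ≤ f t := by
  suffices hpos : ∀ t ≥ 0, 0 < f t from
    fun t ht => h (t + 1) (fun s hs => hpos s hs.1) t ⟨ht, by linarith⟩
  by_contra! hneg
  set S := {t | 0 ≤ t ∧ f t ≤ 0}
  have hS : IsClosed S := isClosed_Ici.inter (isClosed_le hf continuous_const)
  have hSbdd : BddBelow S := ⟨0, fun _ hs => hs.1⟩
  obtain ⟨hT0, hfT⟩ : sInf S ∈ S := hS.csInf_mem hneg hSbdd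
  have hT : 0 ≠ sInf S := fun hT => by rw [← hT] at hfT; linarith
  have hbefore : ∀ s ∈ Ico 0 (sInf S), 0 < f s := fun s hs => by
    by_contra! hle
    exact (csInf_le hSbdd ⟨hs.1, hle⟩).not_gt hs.2
  have hclosure : closure (Ico 0 (sInf S)) ⊆ {s | δ ≤ f s} :=
    (isClosed_le continuous_const hf).closure_subset_iff.2 (h _ hbefore)
  rw [closure_Ico hT] at hclosure
  have hδT : δ ≤ f (sInf S) := hclosure ⟨hT0, le_rfl⟩
  linarith

theorem tendsto_zero_of_sq_le {α : Type*} {l : Filter α} {f g : α → ℝ}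
    (hfg : ∀ a, f a ^ 2 ≤ g a) (hg : Tendsto g l (nhds 0)) : Tendsto f l (nhds 0) := by
  refine squeeze_zero_norm (fun a => ?_) (by simpa using hg.sqrt)
  rw [Real.norm_eq_abs, ← sqrt_sq_eq_abs]
  exact sqrt_le_sqrt (hfg a)

theorem abs_log_sub_log_le {a b δ : ℝ} (hδ : 0 < δ) (ha : δ ≤ a) (hb : δ ≤ b) :
    |log a - log b| ≤ |a - b| / δ := by
  have key : ∀ x y, δ ≤ x → δ ≤ y → log x - log y ≤ |x - y| / δ := by
    intro x y hx hy
    have hx0 : 0 < x := hδ.trans_le hx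
    have hy0 : 0 < y := hδ.trans_le hy
    calc log x - log y = log (x / y) := (log_div hx0.ne' hy0.ne').symm
      _ ≤ x / y - 1 := log_le_sub_one_of_pos (div_pos hx0 hy0)
      _ = (x - y) / y := by field_simp
      _ ≤ |x - y| / y := by gcongr; exact le_abs_self _
      _ ≤ |x - y| / δ := by gcongr
  rw [abs_sub_le_iff]
  exact ⟨key a b ha hb, abs_sub_comm a b ▸ key b a hb ha⟩

noncomputable section

def dampingIntegral (k₅ k₆ c x : ℝ) : ℝ := k₅ * x + k₆ * (log (x + c) - log c)

def oscillatorEnergy (k₄ x v : ℝ) : ℝ := k₄ / 2 * x ^ 2 + v ^ 2 / 2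

def platoonLyapunov (k₄ k₅ k₆ c x v : ℝ) : ℝ :=
  oscillatorEnergy k₄ x v + oscillatorEnergy k₄ x (v + dampingIntegral k₅ k₆ c x)

end

section StateSpace

variable {k₄ k₅ k₆ c x : ℝ}

theorem hasDerivAt_dampingIntegral (hx : x + c ≠ 0) :
    HasDerivAt (dampingIntegral k₅ k₆ c) (k₅ + k₆ / (x + c)) x := by
  have hlog : HasDerivAt (fun y => log (y + c)) (1 / (x + c)) x := by
    simpa using ((hasDerivAt_id x).add_const c).log hx
  exact (((hasDerivAt_id x).const_mul k₅).add ((hlog.sub_const (log c)).const_mul k₆)).congr_deriv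
    (by simp only [mul_one, mul_one_div])

theorem mul_sq_le_mul_dampingIntegral (hc : 0 < c) (hx : 0 < x + c) (hk₆ : 0 ≤ k₆) :
    k₅ * x ^ 2 ≤ x * dampingIntegral k₅ k₆ c x := by
  have hlog : 0 ≤ x * (log (x + c) - log c) := by
    rcases le_total 0 x with h | h
    · exact mul_nonneg h (sub_nonneg.2 (log_le_log hc (by linarith)))
    · exact mul_nonneg_of_nonpos_of_nonpos h (sub_nonpos.2 (log_le_log hx (by linarith)))
  unfold dampingIntegral
  nlinarith [mul_nonneg hk₆ hlog]

theorem abs_dampingIntegral_le {δ : ℝ} (hδ : 0 < δ) (hδc : δ ≤ c) (hx : δ ≤ x + c)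
    (hk₅ : 0 ≤ k₅) (hk₆ : 0 ≤ k₆) :
    |dampingIntegral k₅ k₆ c x| ≤ (k₅ + k₆ / δ) * |x| := by
  have hlog : |log (x + c) - log c| ≤ |x| / δ := by
    simpa using abs_log_sub_log_le hδ hx hδc
  calc |dampingIntegral k₅ k₆ c x| ≤ k₅ * |x| + k₆ * |log (x + c) - log c| := by
        unfold dampingIntegral
        refine (abs_add_le _ _).trans ?_
        rw [abs_mul, abs_mul, abs_of_nonneg hk₅, abs_of_nonneg hk₆]
    _ ≤ k₅ * |x| + k₆ * (|x| / δ) := by gcongr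
    _ = (k₅ + k₆ / δ) * |x| := by ring

theorem sq_dampingIntegral_le_platoonLyapunov (hk₄ : 0 ≤ k₄) (v : ℝ) :
    dampingIntegral k₅ k₆ c x ^ 2 ≤ 4 * platoonLyapunov k₄ k₅ k₆ c x v := by
  unfold platoonLyapunov oscillatorEnergy
  nlinarith [mul_nonneg hk₄ (sq_nonneg x), sq_nonneg (2 * v + dampingIntegral k₅ k₆ c x)]

theorem exp_le_of_neg_le_dampingIntegral {K : ℝ} (hK : 0 ≤ K) (hc : 0 < c) (hx : 0 < x + c)
    (hk₅ : 0 ≤ k₅) (hk₆ : 0 < k₆) (hΦ : -K ≤ dampingIntegral k₅ k₆ c x) :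
    c * exp (-K / k₆) ≤ x + c := by
  rcases le_total 0 x with h | h
  · calc c * exp (-K / k₆) ≤ c * 1 := by
          gcongr; exact exp_le_one_iff.2 (div_nonpos_of_nonpos_of_nonneg (by linarith) hk₆.le)
      _ ≤ x + c := by linarith
  · have hlog : -K / k₆ ≤ log (x + c) - log c := by
      unfold dampingIntegral at hΦ
      rw [div_le_iff₀ hk₆]
      nlinarith
    calc c * exp (-K / k₆) ≤ c * exp (log (x + c) - log c) := by gcongr
      _ = x + c := by rw [exp_sub, exp_log hx, exp_log hc]; field_simp

theorem exists_platoonLyapunov_decay {δ : ℝ} (hδ : 0 < δ) (hδc : δ ≤ c)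
    (hk₄ : 0 < k₄) (hk₅ : 0 < k₅) (hk₆ : 0 ≤ k₆) :
    ∃ r > 0, ∀ x v, δ ≤ x + c →
      -(k₅ + k₆ / (x + c)) * v ^ 2 - k₄ * x * dampingIntegral k₅ k₆ c x
        ≤ -r * platoonLyapunov k₄ k₅ k₆ c x v := by
  set M := k₅ + k₆ / δ
  set r := k₄ * k₅ / (2 * k₄ + M ^ 2)
  have hr : 0 < r := by positivity
  have hrx : r * (k₄ + M ^ 2) ≤ k₄ * k₅ := by
    rw [div_mul_eq_mul_div, div_le_iff₀ (by positivity)]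
    nlinarith [mul_pos hk₄ hk₅, mul_pos (mul_pos hk₄ hk₅) hk₄]
  have hrv : r * (3 / 2) ≤ k₅ := by
    rw [div_mul_eq_mul_div, div_le_iff₀ (by positivity)]
    nlinarith [mul_pos hk₄ hk₅, mul_nonneg hk₅.le (sq_nonneg M)]
  refine ⟨r, hr, fun x v hx => ?_⟩
  have hc : 0 < c := hδ.trans_le hδc
  have hxc : 0 < x + c := hδ.trans_le hx
  have hmono : k₅ * x ^ 2 ≤ x * dampingIntegral k₅ k₆ c x :=
    mul_sq_le_mul_dampingIntegral hc hxc hk₆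
  have hΦ : dampingIntegral k₅ k₆ c x ^ 2 ≤ M ^ 2 * x ^ 2 := by
    calc dampingIntegral k₅ k₆ c x ^ 2 = |dampingIntegral k₅ k₆ c x| ^ 2 := (sq_abs _).symm
      _ ≤ (M * |x|) ^ 2 := by gcongr; exact abs_dampingIntegral_le hδ hδc hx hk₅.le hk₆
      _ = M ^ 2 * x ^ 2 := by rw [mul_pow, sq_abs]
  have hdamp : k₅ * v ^ 2 ≤ (k₅ + k₆ / (x + c)) * v ^ 2 := by
    gcongr; linarith [div_nonneg hk₆ hxc.le]
  have hU : platoonLyapunov k₄ k₅ k₆ c x v ≤ (k₄ + M ^ 2) * x ^ 2 + 3 / 2 * v ^ 2 := by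
    unfold platoonLyapunov oscillatorEnergy
    nlinarith [sq_nonneg (v - dampingIntegral k₅ k₆ c x)]
  calc -(k₅ + k₆ / (x + c)) * v ^ 2 - k₄ * x * dampingIntegral k₅ k₆ c x
      ≤ -(k₅ * v ^ 2) - k₄ * (k₅ * x ^ 2) := by linarith [mul_le_mul_of_nonneg_left hmono hk₄.le]
    _ ≤ -(r * (3 / 2) * v ^ 2) - r * (k₄ + M ^ 2) * x ^ 2 := by
      linarith [mul_le_mul_of_nonneg_right hrv (sq_nonneg v),
        mul_le_mul_of_nonneg_right hrx (sq_nonneg x)]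
    _ ≤ -r * platoonLyapunov k₄ k₅ k₆ c x v := by linarith [mul_le_mul_of_nonneg_left hU hr.le]

theorem mul_sq_le_platoonLyapunov (v : ℝ) :
    k₄ * x ^ 2 ≤ platoonLyapunov k₄ k₅ k₆ c x v := by
  unfold platoonLyapunov oscillatorEnergy
  nlinarith [sq_nonneg v, sq_nonneg (v + dampingIntegral k₅ k₆ c x)]

theorem sq_le_two_mul_platoonLyapunov (hk₄ : 0 ≤ k₄) (v : ℝ) :
    v ^ 2 ≤ 2 * platoonLyapunov k₄ k₅ k₆ c x v := by
  unfold platoonLyapunov oscillatorEnergy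
  nlinarith [mul_nonneg hk₄ (sq_nonneg x), sq_nonneg (v + dampingIntegral k₅ k₆ c x)]

end StateSpace

section Trajectory

variable {e ν : ℝ → ℝ} {k₄ k₅ k₆ c : ℝ}

theorem hasDerivAt_platoonLyapunov (he : ∀ t, HasDerivAt e (ν t) t)
    (hν : ∀ t, HasDerivAt ν (-k₄ * e t - k₅ * ν t - k₆ * ν t / (e t + c)) t)
    {t : ℝ} (ht : e t + c ≠ 0) :
    HasDerivAt (fun t => platoonLyapunov k₄ k₅ k₆ c (e t) (ν t))
      (-(k₅ + k₆ / (e t + c)) * ν t ^ 2 - k₄ * e t * dampingIntegral k₅ k₆ c (e t)) t := by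
  have hΦ := (hasDerivAt_dampingIntegral (k₅ := k₅) (k₆ := k₆) ht).comp t (he t)
  have hx := ((he t).pow 2).const_mul (k₄ / 2)
  have h := (hx.add (((hν t).pow 2).div_const 2)).add
    (hx.add ((((hν t).add hΦ).pow 2).div_const 2))
  unfold platoonLyapunov oscillatorEnergy
  refine h.congr_deriv ?_
  simp only [Pi.add_apply, Function.comp_apply]
  ring

theorem platoon_exists_safety_margin (hk₄ : 0 ≤ k₄) (hk₅ : 0 ≤ k₅) (hk₆ : 0 < k₆) (hc : 0 < c)
    (he : ∀ t, HasDerivAt e (ν t) t)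
    (hν : ∀ t, HasDerivAt ν (-k₄ * e t - k₅ * ν t - k₆ * ν t / (e t + c)) t)
    (h0 : 0 < e 0 + c) :
    ∃ δ > 0, δ ≤ c ∧ ∀ t ≥ 0, δ ≤ e t + c := by
  set U := fun t => platoonLyapunov k₄ k₅ k₆ c (e t) (ν t)
  set K := √(4 * U 0)
  refine ⟨c * exp (-K / k₆), by positivity, ?_, ?_⟩
  · exact mul_le_of_le_one_right hc.le
      (exp_le_one_iff.2 (div_nonpos_of_nonpos_of_nonneg (neg_nonpos.2 (sqrt_nonneg _)) hk₆.le))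
  refine forall_le_of_bootstrap ((continuous_iff_continuousAt.2 fun t => (he t).continuousAt).add
    continuous_const) (by positivity) h0 fun T hpos s hs => ?_
  have hanti : AntitoneOn U (Ico 0 T) := by
    refine antitoneOn_of_forall_hasDerivAt_nonpos (convex_Ico 0 T)
      (fun t ht => hasDerivAt_platoonLyapunov he hν (hpos t ht).ne') fun t ht => ?_
    have hxc := hpos t (interior_subset ht)
    have := mul_sq_le_mul_dampingIntegral (k₅ := k₅) hc hxc hk₆.le
    nlinarith [mul_nonneg (add_nonneg hk₅ (div_nonneg hk₆.le hxc.le)) (sq_nonneg (ν t)),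
      mul_le_mul_of_nonneg_left this hk₄, mul_nonneg hk₅ (sq_nonneg (e t))]
  have hUs : U s ≤ U 0 := hanti ⟨le_rfl, hs.1.trans_lt hs.2⟩ hs hs.1
  have hΦ : -K ≤ dampingIntegral k₅ k₆ c (e s) := neg_sqrt_le_of_sq_le
    ((sq_dampingIntegral_le_platoonLyapunov hk₄ (ν s)).trans (by linarith))
  exact exp_le_of_neg_le_dampingIntegral (sqrt_nonneg _) hc (hpos s hs) hk₅ hk₆ hΦ

theorem tendsto_platoonLyapunov_atTop (hk₄ : 0 < k₄) (hk₅ : 0 < k₅) (hk₆ : 0 < k₆) (hc : 0 < c)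
    (he : ∀ t, HasDerivAt e (ν t) t)
    (hν : ∀ t, HasDerivAt ν (-k₄ * e t - k₅ * ν t - k₆ * ν t / (e t + c)) t)
    (h0 : 0 < e 0 + c) :
    Tendsto (fun t => platoonLyapunov k₄ k₅ k₆ c (e t) (ν t)) atTop (nhds 0) := by
  obtain ⟨δ, hδ, hδc, hmargin⟩ :=
    platoon_exists_safety_margin hk₄.le hk₅.le hk₆ hc he hν h0
  obtain ⟨r, hr, hdecay⟩ := exists_platoonLyapunov_decay hδ hδc hk₄ hk₅ hk₆.le
  have hexp := le_mul_exp_neg_of_hasDerivAt_le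
    (fun t ht => hasDerivAt_platoonLyapunov he hν (hδ.trans_le (hmargin t ht)).ne')
    (fun t ht => hdecay _ _ (hmargin t ht))
  refine squeeze_zero' (Eventually.of_forall fun t => ?_) ((eventually_ge_atTop 0).mono hexp) ?_
  · exact (mul_nonneg hk₄.le (sq_nonneg _)).trans (mul_sq_le_platoonLyapunov _)
  · simpa using (tendsto_exp_atBot.comp
      (tendsto_id.const_mul_atTop_of_neg (neg_neg_of_pos hr))).const_mul _

end Trajectory

/-- Asymptotic stability of the longitudinal platoon error dynamics with
constructive barrier feedback: every trajectory of ė = ν,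
ν̇ = -k₄e - k₅ν - k₆ν/(e+c) starting with e(0) + c > 0 converges to (0,0). -/
theorem stmt_4
    (e ν : ℝ → ℝ) (k₄ k₅ k₆ c : ℝ)
    (hk₄ : 0 < k₄) (hk₅ : 0 < k₅) (hk₆ : 0 < k₆) (hc : 0 < c)
    (he : ∀ t, HasDerivAt e (ν t) t)
    (hν : ∀ t, HasDerivAt ν
      (-k₄ * e t - k₅ * ν t - k₆ * ν t / (e t + c)) t)
    (h0 : e 0 + c > 0) :
    Tendsto (fun t => (e t, ν t)) atTop (nhds (0, 0)) := by
  have hU := tendsto_platoonLyapunov_atTop hk₄ hk₅ hk₆ hc he hν h0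
  refine (tendsto_zero_of_sq_le (fun t => ?_) (by simpa using hU.div_const k₄)).prodMk_nhds
    (tendsto_zero_of_sq_le (fun t => sq_le_two_mul_platoonLyapunov hk₄.le (ν t))
      (by simpa using hU.const_mul 2))
  rw [le_div_iff₀ hk₄, mul_comm]
  exact mul_sq_le_platoonLyapunov _
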